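/- Let M = ⊕_{i∈I} M_i be a right R-module such that each M_i is a fully invariant submodule of M. Then: (1) for an arbitrary index set I, M is a CS-Rickart module if and only if each M_i is a CS-Rickart module; (2) if I = {1,…,n} is finite, then M is a d-CS-Rickart module if and only if each M_i is a d-CS-Rickart module. -/

import Mathlib

namespace CSRickartPaper

section Defs

variable {R : Type*} [Ring R] {M : Type*} [AddCommGroup M] [Module R M]

/-- `N` is an essential submodule of `P` (inside the ambient module `M`):
`N ≤ P` and every submodule of `P` intersecting `N` trivially is zero. -/
def EssentialIn (N P : Submodule R M) : Prop :=
  N ≤ P ∧ ∀ K : Submodule R M, K ≤ P → N ⊓ K = ⊥ → K = ⊥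

/-- `N` is a small (superfluous) submodule of `P`. -/
def SmallIn (N P : Submodule R M) : Prop :=
  N ≤ P ∧ ∀ K : Submodule R M, K ≤ P → N ⊔ K = P → K = P

/-- `N` is a direct summand of `M`. -/
def IsDirectSummand (N : Submodule R M) : Prop :=
  ∃ K : Submodule R M, IsCompl N K

/-- `N` lies above the direct summand `D` of `M`: `M = D ⊕ K`, `D ≤ N` and
`N ⊓ K` is small in `K`. -/
def LiesAbove (N D : Submodule R M) : Prop :=
  ∃ K : Submodule R M, IsCompl D K ∧ D ≤ N ∧ SmallIn (N ⊓ K) K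

/-- `N` lies above a direct summand of `M`. -/
def LiesAboveSummand (N : Submodule R M) : Prop :=
  ∃ D : Submodule R M, LiesAbove N D

end Defs

section ModuleDefs

variable (R : Type*) [Ring R] (M : Type*) [AddCommGroup M] [Module R M]

/-- `M` is a CS-Rickart module: the kernel of every endomorphism is essential
in a direct summand `eM`, `e` an idempotent endomorphism. -/
def IsCSRickart : Prop :=
  ∀ φ : Module.End R M, ∃ e : Module.End R M, IsIdempotentElem e ∧
    EssentialIn (LinearMap.ker φ) (LinearMap.range e)

/-- `M` is a d-CS-Rickart module: the image of every endomorphism lies above a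
direct summand of `M`. -/
def IsDCSRickart : Prop :=
  ∀ φ : Module.End R M, LiesAboveSummand (LinearMap.range φ)

/-- `M` is a Rickart module. -/
def IsRickart : Prop :=
  ∀ φ : Module.End R M, ∃ e : Module.End R M, IsIdempotentElem e ∧
    LinearMap.ker φ = LinearMap.range e

/-- `M` is a dual Rickart module. -/
def IsDRickart : Prop :=
  ∀ φ : Module.End R M, ∃ e : Module.End R M, IsIdempotentElem e ∧
    LinearMap.range φ = LinearMap.range e

/-- `M` is a CS (extending) module. -/
def IsCSModule : Prop :=
  ∀ N : Submodule R M, ∃ D : Submodule R M, IsDirectSummand D ∧ EssentialIn N D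

/-- `M` is a lifting (d-CS) module. -/
def IsLifting : Prop :=
  ∀ N : Submodule R M, LiesAboveSummand N

/-- `M` is a singular module: the annihilator of every element is an essential
ideal of `R`. -/
def IsSingularModule : Prop :=
  ∀ m : M, EssentialIn (LinearMap.ker (LinearMap.toSpanSingleton R M m)) (⊤ : Submodule R R)

/-- `M` is uniform: every nonzero submodule is essential. -/
def IsUniformModule : Prop :=
  ∀ N : Submodule R M, N ≠ ⊥ → EssentialIn N (⊤ : Submodule R M)

/-- `M` satisfies the C₂ condition: every submodule isomorphic to a direct
summand is itself a direct summand. -/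
def IsC2 : Prop :=
  ∀ N D : Submodule R M, IsDirectSummand D → Nonempty (N ≃ₗ[R] D) → IsDirectSummand N

/-- `M` is K-nonsingular. -/
def IsKNonsingular : Prop :=
  ∀ φ : Module.End R M, ∀ N : Submodule R M, EssentialIn N (⊤ : Submodule R M) →
    N ≤ LinearMap.ker φ → φ = 0

/-- `M` is T-noncosingular. -/
def IsTNoncosingular : Prop :=
  ∀ φ : Module.End R M, φ ≠ 0 → ¬ SmallIn (LinearMap.range φ) (⊤ : Submodule R M)

/-- `M` is an SIP-CS module. -/
def IsSIPCS : Prop :=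
  ∀ A B : Submodule R M, IsDirectSummand A → IsDirectSummand B →
    ∃ D : Submodule R M, IsDirectSummand D ∧ EssentialIn (A ⊓ B) D

/-- `M` is an SSP-d-CS module. -/
def IsSSPdCS : Prop :=
  ∀ A B : Submodule R M, IsDirectSummand A → IsDirectSummand B →
    LiesAboveSummand (A ⊔ B)

end ModuleDefs

section RelDefs

variable (R : Type*) [Ring R] (M N : Type*) [AddCommGroup M] [Module R M]
  [AddCommGroup N] [Module R N]

/-- `M` is relatively CS-Rickart to `N`. -/
def IsRelCSRickart : Prop :=
  ∀ φ : M →ₗ[R] N, ∃ e : Module.End R M, IsIdempotentElem e ∧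
    EssentialIn (LinearMap.ker φ) (LinearMap.range e)

/-- `M` is relatively d-CS-Rickart to `N`. -/
def IsRelDCSRickart : Prop :=
  ∀ φ : M →ₗ[R] N, LiesAboveSummand (LinearMap.range φ)

/-- `N` is `M`-injective. -/
def IsRelInjective : Prop :=
  ∀ (A : Submodule R M) (f : A →ₗ[R] N), ∃ g : M →ₗ[R] N, ∀ a : A, g a = f a

end RelDefs

section RingDefs

variable (R : Type*) [Ring R]

/-- The annihilator of an element `a` of `R`, as an ideal (kernel of `r ↦ r • a`). -/
def annElem (a : R) : Submodule R R :=
  LinearMap.ker (LinearMap.toSpanSingleton R R a)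

/-- The annihilator of a subset `X` of `R`. -/
def annSet (X : Set R) : Submodule R R :=
  ⨅ x ∈ X, annElem R x

/-- The principal ideal generated by `e`, i.e. the image of `r ↦ r • e`. -/
def idealGen (e : R) : Submodule R R :=
  LinearMap.range (LinearMap.toSpanSingleton R R e)

/-- `R` is an ACS ring: the annihilator of every element is essential in a
direct summand `eR` of `R`. -/
def IsACSRing : Prop :=
  ∀ a : R, ∃ e : R, IsIdempotentElem e ∧ EssentialIn (annElem R a) (idealGen R e)

/-- `R` is an essentially Baer ring. -/
def IsEssentiallyBaer : Prop :=
  ∀ X : Set R, X.Nonempty → ∃ e : R, IsIdempotentElem e ∧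
    EssentialIn (annSet R X) (idealGen R e)

/-- The Jacobson radical of the ring `R`. -/
noncomputable def jacRad : Ideal R := Ideal.jacobson (⊥ : Ideal R)

/-- `R` is semiregular: `R/J(R)` is von Neumann regular and idempotents lift
modulo `J(R)` (stated elementwise). -/
def IsSemiregularRing : Prop :=
  (∀ a : R, ∃ b : R, a - a * b * a ∈ jacRad R) ∧
  (∀ a : R, a - a * a ∈ jacRad R →
    ∃ e : R, IsIdempotentElem e ∧ e - a ∈ jacRad R)

/-- `J(R)` coincides with the singular ideal `Z(R)`. -/
def JacEqSingular : Prop :=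
  ∀ a : R, a ∈ jacRad R ↔ EssentialIn (annElem R a) (⊤ : Submodule R R)

end RingDefs

section GenDefs

variable {R : Type*} [Ring R] {M : Type*} [AddCommGroup M] [Module R M]

/-- A submodule is `n`-generated if it is spanned by at most `n` elements. -/
def NGen (n : ℕ) (N : Submodule R M) : Prop :=
  ∃ f : Fin n → M, Submodule.span R (Set.range f) = N

end GenDefs

end CSRickartPaper

/-!
The implications from `M` to the summands hold for every direct summand `P` of `M`, with
complement `C`: an endomorphism `ψ` of `P` extended by zero on `C` is an endomorphism `φ` of `M`
with `ker φ = ker ψ ⊕ C` and `im φ = im ψ`, and the modular law cuts a direct summand attached to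
`φ` down to one of `P`.

Conversely, full invariance makes every endomorphism `φ` of `M` diagonal, so `ker φ` and `im φ`
are the direct sums of the kernels and images of its components `φ|Mᵢ`, and the direct sum of
summands `Dᵢ ⊕ Kᵢ = Mᵢ` chosen componentwise is a decomposition of `M`. Essential extensions
survive arbitrary direct sums, because essentiality is tested on single elements, which have
finitely many components; small submodules only survive finite sums, hence the finiteness in (2).
-/

theorem IsCompl.inf_sup_of_le {α : Type*} [Lattice α] [BoundedOrder α] [IsModularLattice α]
    {a b c d : α} (hab : IsCompl a b) (hcd : IsCompl c d) (hbc : b ≤ c) :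
    IsCompl (a ⊓ c) (b ⊔ d) := by
  have hsup : a ⊓ c ⊔ b = c := by
    rw [sup_comm, ← sup_inf_assoc_of_le a hbc, sup_comm, hab.sup_eq_top, top_inf_eq]
  constructor
  · rw [disjoint_iff, inf_assoc, inf_comm c, sup_inf_assoc_of_le d hbc, hcd.symm.inf_eq_bot,
      sup_bot_eq, hab.inf_eq_bot]
  · rw [codisjoint_iff, ← sup_assoc, hsup, hcd.sup_eq_top]

theorem iSupIndep.isCompl_iSup_ne {ι α : Type*} [CompleteLattice α] {t : ι → α}
    (ht : iSupIndep t) (htop : ⨆ i, t i = ⊤) (i : ι) : IsCompl (t i) (⨆ (j) (_ : j ≠ i), t j) :=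
  ⟨ht i, codisjoint_iff.2 <| by rw [← iSup_split_single t i, htop]⟩

namespace CSRickartPaper

open Submodule DirectSum

section EssentialSmall

variable {R : Type*} [Ring R] {M : Type*} [AddCommGroup M] [Module R M]
  {N : Type*} [AddCommGroup N] [Module R N]

theorem essentialIn_iff {A D : Submodule R M} :
    EssentialIn A D ↔ A ≤ D ∧ ∀ x ∈ D, x ≠ 0 → ∃ r : R, r • x ∈ A ∧ r • x ≠ 0 := by
  refine and_congr_right fun _ => ⟨fun h x hx hx0 => ?_, fun h K hK hAK => ?_⟩
  · by_contra! hA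
    have hspan : A ⊓ span R {x} = ⊥ := by
      refine eq_bot_iff.2 fun y ⟨hyA, hyx⟩ => ?_
      obtain ⟨r, rfl⟩ := mem_span_singleton.1 hyx
      exact (mem_bot R).2 (hA r hyA)
    exact hx0 (span_singleton_eq_bot.1 (h _ (span_le.2 (Set.singleton_subset_iff.2 hx)) hspan))
  · refine eq_bot_iff.2 fun x hxK => (mem_bot R).2 ?_
    by_contra hx0
    obtain ⟨r, hrA, hr0⟩ := h x (hK hxK) hx0
    exact hr0 ((mem_bot R).1 (hAK ▸ mem_inf.2 ⟨hrA, K.smul_mem r hxK⟩))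

theorem EssentialIn.inf_left {A D : Submodule R M} (h : EssentialIn A D) (X : Submodule R M) :
    EssentialIn (X ⊓ A) (X ⊓ D) :=
  ⟨inf_le_inf_left X h.1, fun K hK hAK => h.2 K (hK.trans inf_le_right) <| by
    rwa [inf_comm X, inf_assoc, inf_eq_right.2 (hK.trans inf_le_left)] at hAK⟩

theorem EssentialIn.exists_smul_mem_of_disjoint {A D E : Submodule R M} (h : EssentialIn A D)
    (hDE : Disjoint D E) {d e : M} (hd : d ∈ D) (he : e ∈ E) (hde : d + e ≠ 0) :
    ∃ r : R, r • d ∈ A ∧ r • (d + e) ≠ 0 := by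
  by_cases hd0 : d = 0
  · exact ⟨1, by simp [hd0], by simpa using hde⟩
  obtain ⟨r, hrA, hr0⟩ := (essentialIn_iff.1 h).2 d hd hd0
  refine ⟨r, hrA, fun hr => hr0 (disjoint_def.1 hDE _ (D.smul_mem r hd) ?_)⟩
  rw [smul_add] at hr
  rw [eq_neg_of_add_eq_zero_left hr]
  exact neg_mem (E.smul_mem r he)

theorem EssentialIn.sup {A₁ D₁ A₂ D₂ : Submodule R M} (h₁ : EssentialIn A₁ D₁)
    (h₂ : EssentialIn A₂ D₂) (hD : Disjoint D₁ D₂) : EssentialIn (A₁ ⊔ A₂) (D₁ ⊔ D₂) := by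
  refine essentialIn_iff.2 ⟨sup_le_sup h₁.1 h₂.1, fun x hx hx0 => ?_⟩
  obtain ⟨d₁, hd₁, d₂, hd₂, rfl⟩ := mem_sup.1 hx
  obtain ⟨t, ht, ht0⟩ := h₂.exists_smul_mem_of_disjoint hD.symm hd₂ hd₁ (by rwa [add_comm])
  rw [smul_add, add_comm] at ht0
  obtain ⟨u, hu, hu0⟩ :=
    h₁.exists_smul_mem_of_disjoint hD (D₁.smul_mem t hd₁) (D₂.smul_mem t hd₂) ht0
  refine ⟨u * t, ?_, by rwa [mul_smul, smul_add]⟩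
  rw [mul_smul, smul_add, smul_add]
  exact add_mem_sup hu (A₂.smul_mem u ht)

theorem essentialIn_iSup {ι : Type*} {A D : ι → Submodule R M} (hD : iSupIndep D)
    (h : ∀ i, EssentialIn (A i) (D i)) : EssentialIn (⨆ i, A i) (⨆ i, D i) := by
  classical
  have hfin (s : Finset ι) : EssentialIn (⨆ i ∈ s, A i) (⨆ i ∈ s, D i) := by
    induction s using Finset.induction_on with
    | empty =>
      simp only [Finset.notMem_empty, iSup_false, iSup_bot]
      exact ⟨le_rfl, fun K hK _ => le_bot_iff.1 hK⟩
    | insert j s hj ih =>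
      simp only [Finset.iSup_insert]
      exact (h j).sup ih (hD.disjoint_biSup hj)
  refine essentialIn_iff.2 ⟨iSup_mono fun i => (h i).1, fun x hx hx0 => ?_⟩
  obtain ⟨s, hs⟩ := mem_iSup_iff_exists_finset.1 hx
  obtain ⟨r, hr, hr0⟩ := (essentialIn_iff.1 (hfin s)).2 x hs hx0
  exact ⟨r, iSup₂_le (fun i _ => le_iSup A i) hr, hr0⟩

theorem essentialIn_map_iff {f : N →ₗ[R] M} (hf : Function.Injective f) {A D : Submodule R N} :
    EssentialIn (A.map f) (D.map f) ↔ EssentialIn A D := by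
  refine and_congr (map_le_map_iff_of_injective hf A D)
    ⟨fun h K hK hAK => ?_, fun h K hK hAK => ?_⟩
  · refine map_injective_of_injective hf ?_
    rw [h _ (map_mono hK) (by rw [← map_inf f hf, hAK, Submodule.map_bot]), Submodule.map_bot]
  · obtain ⟨K, rfl⟩ : ∃ K', K'.map f = K :=
      ⟨K.comap f, map_comap_eq_of_le (hK.trans LinearMap.map_le_range)⟩
    rw [map_le_map_iff_of_injective hf] at hK
    rw [← map_inf f hf, ← Submodule.map_bot f] at hAK
    rw [h K hK (map_injective_of_injective hf hAK), Submodule.map_bot]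

theorem SmallIn.sup {S₁ S₂ K : Submodule R M} (h₁ : SmallIn S₁ K) (h₂ : SmallIn S₂ K) :
    SmallIn (S₁ ⊔ S₂) K :=
  ⟨sup_le h₁.1 h₂.1, fun L hL hsup =>
    h₂.2 L hL (h₁.2 _ (sup_le h₂.1 hL) (by rwa [← sup_assoc]))⟩

theorem SmallIn.iSup {ι : Type*} [Finite ι] {S : ι → Submodule R M} {K : Submodule R M}
    (h : ∀ i, SmallIn (S i) K) : SmallIn (⨆ i, S i) K := by
  classical
  cases nonempty_fintype ι
  suffices ∀ s : Finset ι, SmallIn (⨆ i ∈ s, S i) K by simpa using this Finset.univ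
  intro s
  induction s using Finset.induction_on with
  | empty =>
    simp only [Finset.notMem_empty, iSup_false, iSup_bot]
    exact ⟨bot_le, fun L _ hL => by rwa [bot_sup_eq] at hL⟩
  | insert j s _ ih =>
    rw [Finset.iSup_insert]
    exact (h j).sup ih

theorem SmallIn.map {S K : Submodule R N} (h : SmallIn S K) (f : N →ₗ[R] M) {L : Submodule R M}
    (hKL : K.map f ≤ L) : SmallIn (S.map f) L := by
  refine ⟨(map_mono h.1).trans hKL, fun L' hL' hsup => ?_⟩
  have hK : S ⊔ K ⊓ L'.comap f = K := by
    refine le_antisymm (sup_le h.1 inf_le_left) fun k hk => ?_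
    obtain ⟨_, ⟨s, hs, rfl⟩, l, hl, hsl⟩ := mem_sup.1 (hsup ▸ hKL (mem_map_of_mem hk))
    have hks : k - s ∈ K ⊓ L'.comap f :=
      ⟨K.sub_mem hk (h.1 hs), show f (k - s) ∈ L' by rwa [map_sub, ← hsl, add_sub_cancel_left]⟩
    simpa using add_mem_sup hs hks
  have hKL' : K ≤ L'.comap f := h.2 _ inf_le_left hK ▸ inf_le_right
  rw [← hsup, eq_comm, sup_eq_right]
  exact (map_mono h.1).trans (map_le_iff_le_comap.2 hKL')

theorem SmallIn.of_map {f : N →ₗ[R] M} (hf : Function.Injective f) {S K : Submodule R N}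
    (h : SmallIn (S.map f) (K.map f)) : SmallIn S K :=
  ⟨(map_le_map_iff_of_injective hf _ _).1 h.1, fun L hL hsup =>
    map_injective_of_injective hf (h.2 _ (map_mono hL) (by rw [← Submodule.map_sup, hsup]))⟩

theorem SmallIn.of_isCompl {S K K' Q : Submodule R M} (h : SmallIn S K) (hSK' : S ≤ K')
    (hK' : K' ≤ K) (hc : IsCompl K' Q) : SmallIn S K' := by
  refine ⟨hSK', fun L hL hsup => ?_⟩
  have hK : K' ⊔ Q ⊓ K = K := by rw [← sup_inf_assoc_of_le Q hK', hc.sup_eq_top, top_inf_eq]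
  have hLQ : L ⊔ Q ⊓ K = K :=
    h.2 _ (sup_le (hL.trans hK') inf_le_right) (by rw [← sup_assoc, hsup, hK])
  have hQK : Q ⊓ K ⊓ K' = ⊥ :=
    eq_bot_iff.2 ((inf_le_inf_right K' inf_le_left).trans hc.symm.inf_eq_bot.le)
  calc L = L ⊔ Q ⊓ K ⊓ K' := by rw [hQK, sup_bot_eq]
    _ = (L ⊔ Q ⊓ K) ⊓ K' := (sup_inf_assoc_of_le _ hL).symm
    _ = K' := by rw [hLQ, inf_eq_right.2 hK']

end EssentialSmall

section DirectSummand

variable {R : Type*} [Ring R] {M : Type*} [AddCommGroup M] [Module R M]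

theorem isCSRickart_iff : IsCSRickart R M ↔ ∀ φ : Module.End R M,
    ∃ D : Submodule R M, IsDirectSummand D ∧ EssentialIn (LinearMap.ker φ) D :=
  forall_congr' fun _ =>
    ⟨fun ⟨_, he, hess⟩ => ⟨_, ⟨_, LinearMap.IsIdempotentElem.isCompl he⟩, hess⟩,
      fun ⟨D, ⟨K, hDK⟩, hess⟩ =>
        ⟨D.projection K hDK, isIdempotentElem_projection hDK, by rwa [range_projection]⟩⟩

variable {P C : Submodule R M}

theorem IsCSRickart.of_isCompl (hM : IsCSRickart R M) (hPC : IsCompl P C) :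
    IsCSRickart R P := by
  refine isCSRickart_iff.2 fun ψ => ?_
  set φ := LinearMap.ofIsCompl hPC (P.subtype ∘ₗ ψ) 0
  have hker : LinearMap.ker ψ = (LinearMap.ker φ).comap P.subtype := by
    ext v
    simp [φ, LinearMap.ofIsCompl_apply_left]
  have hC : C ≤ LinearMap.ker φ := fun c hc => by
    simpa [φ] using LinearMap.ofIsCompl_apply_right hPC (φ := P.subtype ∘ₗ ψ) (ψ := 0) ⟨c, hc⟩
  obtain ⟨D, ⟨K, hDK⟩, hess⟩ := isCSRickart_iff.1 hM φ
  refine ⟨(P ⊓ D).comap P.subtype, ⟨_, isCompl_comap_subtype_of_isCompl_of_le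
    (hPC.inf_sup_of_le hDK (hC.trans hess.1)) inf_le_left⟩, ?_⟩
  rw [hker, ← essentialIn_map_iff P.injective_subtype, map_comap_subtype, map_comap_subtype,
    ← inf_assoc, inf_idem]
  exact hess.inf_left P

theorem IsDCSRickart.of_isCompl (hM : IsDCSRickart R M) (hPC : IsCompl P C) :
    IsDCSRickart R P := by
  intro ψ
  set φ := LinearMap.ofIsCompl hPC (P.subtype ∘ₗ ψ) 0
  have hrange : LinearMap.range φ = (LinearMap.range ψ).map P.subtype := by
    simp [φ, LinearMap.range_ofIsCompl, LinearMap.range_comp]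
  obtain ⟨D, K, hDK, hDN, hsmall⟩ := hM φ
  have hNP : LinearMap.range φ ≤ P := hrange ▸ map_subtype_le P _
  have hDP : D ≤ P := hDN.trans hNP
  refine ⟨D.comap P.subtype, K.comap P.subtype,
    isCompl_comap_subtype_of_isCompl_of_le hDK hDP, ?_, SmallIn.of_map P.injective_subtype ?_⟩
  · rw [← comap_map_eq_of_injective P.injective_subtype (LinearMap.range ψ), ← hrange]
    exact comap_mono hDN
  · rw [map_inf _ P.injective_subtype, ← hrange, map_comap_subtype, ← inf_assoc,
      inf_eq_left.2 hNP]
    exact hsmall.of_isCompl (inf_le_inf_right K hNP) inf_le_right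
      (inf_comm K P ▸ hDK.symm.inf_sup_of_le hPC hDP)

end DirectSummand

section Decomposition

variable {R : Type*} [Ring R] {M : Type*} [AddCommGroup M] [Module R M]
  {ι : Type*} {𝕄 : ι → Submodule R M}

theorem range_eq_iSup_map_range_restrict (htop : ⨆ i, 𝕄 i = ⊤)
    (h𝕄 : ∀ i, (𝕄 i).IsFullyInvariant) (f : Module.End R M) :
    LinearMap.range f = ⨆ i, (LinearMap.range (f.restrict (h𝕄 i f))).map (𝕄 i).subtype := by
  simp_rw [LinearMap.range_restrict, map_comap_subtype,
    inf_eq_right.2 (map_le_iff_le_comap.2 (h𝕄 _ f)), ← Submodule.map_iSup, htop,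
    LinearMap.range_eq_map]

variable [DecidableEq ι]

section

variable [Decomposition 𝕄]

theorem mem_iSup_map_subtype_iff {S : ∀ i, Submodule R (𝕄 i)} {x : M} :
    x ∈ ⨆ i, (S i).map (𝕄 i).subtype ↔ ∀ i, decompose 𝕄 x i ∈ S i := by
  classical
  refine ⟨fun hx => ?_, fun hx => ?_⟩
  · refine iSup_induction _ (motive := fun y => ∀ i, decompose 𝕄 y i ∈ S i) hx ?_ ?_ ?_
    · rintro j _ ⟨v, hv, rfl⟩ i
      rcases eq_or_ne j i with rfl | hji
      · simpa [decompose_coe] using hv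
      · simp [decompose_coe, of_eq_of_ne _ _ _ hji.symm]
    · simp
    · intro y z hy hz i
      simpa [decompose_add] using add_mem (hy i) (hz i)
  · rw [← sum_support_decompose 𝕄 x]
    exact sum_mem fun i _ => mem_iSup_of_mem i (mem_map_of_mem (hx i))

theorem iSup_map_subtype_inf (S T : ∀ i, Submodule R (𝕄 i)) :
    (⨆ i, (S i).map (𝕄 i).subtype) ⊓ (⨆ i, (T i).map (𝕄 i).subtype) =
      ⨆ i, (S i ⊓ T i).map (𝕄 i).subtype := by
  ext x
  simp only [mem_inf, mem_iSup_map_subtype_iff, forall_and]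

theorem isCompl_iSup_map_subtype {S T : ∀ i, Submodule R (𝕄 i)}
    (hST : ∀ i, IsCompl (S i) (T i)) :
    IsCompl (⨆ i, (S i).map (𝕄 i).subtype) (⨆ i, (T i).map (𝕄 i).subtype) := by
  constructor
  · simp [disjoint_iff, iSup_map_subtype_inf, (hST _).inf_eq_bot]
  · rw [codisjoint_iff, ← iSup_sup_eq]
    simp_rw [← Submodule.map_sup, (hST _).sup_eq_top, map_subtype_top]
    exact (Decomposition.isInternal 𝕄).submodule_iSup_eq_top

theorem decompose_apply_of_isFullyInvariant (h𝕄 : ∀ i, (𝕄 i).IsFullyInvariant)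
    (f : Module.End R M) (x : M) (i : ι) :
    (decompose 𝕄 (f x) i : M) = f (decompose 𝕄 x i) := by
  induction x using Decomposition.inductionOn 𝕄 with
  | zero => simp
  | @homogeneous j v =>
    rcases eq_or_ne j i with rfl | hji
    · rw [decompose_of_mem_same 𝕄 (h𝕄 j f v.2), decompose_coe, of_eq_same]
    · rw [decompose_of_mem_ne 𝕄 (h𝕄 j f v.2) hji, decompose_coe, of_eq_of_ne _ _ _ hji.symm,
        ZeroMemClass.coe_zero, map_zero]
  | add x y hx hy => simp [decompose_add, hx, hy]

theorem ker_eq_iSup_map_ker_restrict (h𝕄 : ∀ i, (𝕄 i).IsFullyInvariant)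
    (f : Module.End R M) :
    LinearMap.ker f = ⨆ i, (LinearMap.ker (f.restrict (h𝕄 i f))).map (𝕄 i).subtype := by
  ext x
  have hcomp (i : ι) : f.restrict (h𝕄 i f) (decompose 𝕄 x i) = decompose 𝕄 (f x) i :=
    Subtype.ext (decompose_apply_of_isFullyInvariant h𝕄 f x i).symm
  rw [LinearMap.mem_ker, ← (decompose 𝕄).injective.eq_iff' (decompose_zero 𝕄), DirectSum.ext_iff]
  simp only [mem_iSup_map_subtype_iff, LinearMap.mem_ker, hcomp, DirectSum.zero_apply]

end

theorem isCSRickart_of_isInternal (h : IsInternal 𝕄) (h𝕄 : ∀ i, (𝕄 i).IsFullyInvariant)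
    (hM : ∀ i, IsCSRickart R (𝕄 i)) : IsCSRickart R M := by
  let _ := h.chooseDecomposition
  refine isCSRickart_iff.2 fun φ => ?_
  choose D hD hess using fun i => isCSRickart_iff.1 (hM i) (φ.restrict (h𝕄 i φ))
  choose K hDK using hD
  refine ⟨⨆ i, (D i).map (𝕄 i).subtype, ⟨_, isCompl_iSup_map_subtype hDK⟩, ?_⟩
  rw [ker_eq_iSup_map_ker_restrict h𝕄]
  exact essentialIn_iSup (h.submodule_iSupIndep.mono fun i => map_subtype_le _ _)
    fun i => (essentialIn_map_iff (𝕄 i).injective_subtype).2 (hess i)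

theorem isDCSRickart_of_isInternal [Finite ι] (h : IsInternal 𝕄)
    (h𝕄 : ∀ i, (𝕄 i).IsFullyInvariant) (hM : ∀ i, IsDCSRickart R (𝕄 i)) :
    IsDCSRickart R M := by
  let _ := h.chooseDecomposition
  intro φ
  choose D K hDK hDN hsmall using fun i => hM i (φ.restrict (h𝕄 i φ))
  have hrange := range_eq_iSup_map_range_restrict h.submodule_iSup_eq_top h𝕄 φ
  refine ⟨⨆ i, (D i).map (𝕄 i).subtype, ⨆ i, (K i).map (𝕄 i).subtype,
    isCompl_iSup_map_subtype hDK, hrange ▸ iSup_mono fun i => map_mono (hDN i), ?_⟩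
  rw [hrange, iSup_map_subtype_inf]
  exact SmallIn.iSup fun i => (hsmall i).map _ (le_iSup (fun j => (K j).map (𝕄 j).subtype) i)

end Decomposition

/-- For an internal direct sum of fully invariant submodules:
(1) over any index set, the sum is CS-Rickart iff each summand is;
(2) over a finite index set, the sum is d-CS-Rickart iff each summand is. -/
theorem fullyInvariant_directSum_csRickart
    {R : Type*} [Ring R] {M : Type*} [AddCommGroup M] [Module R M] :
    (∀ (I : Type*) [DecidableEq I] (𝕄 : I → Submodule R M),
        DirectSum.IsInternal 𝕄 →
        (∀ (φ : Module.End R M) (i : I), (𝕄 i).map φ ≤ 𝕄 i) →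
        (IsCSRickart R M ↔ ∀ i, IsCSRickart R (𝕄 i))) ∧
    (∀ (n : ℕ) (𝕄 : Fin n → Submodule R M),
        DirectSum.IsInternal 𝕄 →
        (∀ (φ : Module.End R M) (i : Fin n), (𝕄 i).map φ ≤ 𝕄 i) →
        (IsDCSRickart R M ↔ ∀ i, IsDCSRickart R (𝕄 i))) := by
  constructor
  · intro I _ 𝕄 h hfi
    have h𝕄 : ∀ i, (𝕄 i).IsFullyInvariant := fun i φ => map_le_iff_le_comap.1 (hfi φ i)
    have hcompl := h.submodule_iSupIndep.isCompl_iSup_ne h.submodule_iSup_eq_top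
    exact ⟨fun hM i => hM.of_isCompl (hcompl i), isCSRickart_of_isInternal h h𝕄⟩
  · intro n 𝕄 h hfi
    have h𝕄 : ∀ i, (𝕄 i).IsFullyInvariant := fun i φ => map_le_iff_le_comap.1 (hfi φ i)
    have hcompl := h.submodule_iSupIndep.isCompl_iSup_ne h.submodule_iSup_eq_top
    exact ⟨fun hM i => hM.of_isCompl (hcompl i), isDCSRickart_of_isInternal h h𝕄⟩

end CSRickartPaper
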